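/- Linear convergence of the BN-OLS loss from linear convergence of the residual: Define ẽ_k := u − (a_k/σ(w_k))·w_k (so the loss is J_k = ½‖ẽ_k‖²_H) and e_k := u − (w_kᵀg/σ(w_k)²)·w_k. Then the identity ‖ẽ_k‖²_H = ‖e_k‖²_H + (a_k − w_kᵀg/σ(w_k))² holds, and if ε_a ∈ (0, 1] and ‖e_k‖_H ≤ C·ρ^k for some C > 0 and ρ ∈ (0, 1), then there exists a constant C₂ > 0 (depending on ε, H, u, w₀ and C) such that ‖ẽ_k‖²_H ≤ C²ρ^{2k} + (C₁(1 − ε_a)^k + C₂·k·γ^k)² for all k, where γ := max(ρ, 1 − ε_a) and C₁ := |a₀ − w₀ᵀg/σ(w₀)|; in particular the loss converges to 0 linearly when ρ < 1 and ε_a > 0. -/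

import Mathlib

open Matrix Filter Topology

noncomputable section

/-!
Write `s_k = w_kᵀHu / σ(w_k)` for the best scale along `w_k` and `b_k = a_k - s_k`. Since `e_k`
is `H`-orthogonal to `w_k`, `‖ẽ_k‖²_H = ‖e_k‖²_H + b_k²`, and the `a`-update reads
`b_{k+1} = (1 - ε_a) b_k + (s_k - s_{k+1})`. The `w`-step `ε (a_k / σ(w_k)) H e_k` is
Euclidean-orthogonal to `w_k`, so `|w_k|` never decreases and `σ(w_k)` stays bounded below; there
`s` is Lipschitz in `‖·‖_H`, whence `|s_{k+1} - s_k| = O((|b_k| + ‖u‖_H) ρ^k)`. A discrete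
Grönwall inequality first bounds `b_k`; the recurrence then contracts at rate `1 - ε_a` under an
`O(ρ^k)` forcing, which gives `|b_k| ≤ |b_0| (1 - ε_a)^k + C₂ k γ^k`.
-/

namespace Matrix

variable {n : Type*} [Fintype n] {H : Matrix n n ℝ}

/-- `‖x‖_H`, the paper's `σ(x)`. -/
def energyNorm (H : Matrix n n ℝ) (x : n → ℝ) : ℝ := √(x ⬝ᵥ H *ᵥ x)

/-- The `H`-orthogonal rejection of `u` from `w`; the paper's `e_k` is `rejection H (w k) u`. -/
def rejection (H : Matrix n n ℝ) (w u : n → ℝ) : n → ℝ :=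
  u - (w ⬝ᵥ H *ᵥ u / H.energyNorm w ^ 2) • w

lemma energyNorm_nonneg (H : Matrix n n ℝ) (x : n → ℝ) : 0 ≤ H.energyNorm x := Real.sqrt_nonneg _

lemma energyNorm_smul (c : ℝ) (x : n → ℝ) : H.energyNorm (c • x) = |c| * H.energyNorm x := by
  rw [energyNorm, energyNorm, mulVec_smul, smul_dotProduct, dotProduct_smul, smul_eq_mul,
    smul_eq_mul, ← mul_assoc, ← sq, Real.sqrt_mul (sq_nonneg c), Real.sqrt_sq_eq_abs]

lemma dotProduct_self_le_add_of_dotProduct_eq_zero {x y : n → ℝ} (h : x ⬝ᵥ y = 0) :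
    x ⬝ᵥ x ≤ (x + y) ⬝ᵥ (x + y) := by
  have hy : 0 ≤ y ⬝ᵥ y := by simpa using dotProduct_star_self_nonneg y
  rw [add_dotProduct, dotProduct_add, dotProduct_add, dotProduct_comm y x, h]
  linarith

lemma dotProduct_mulVec_le_sum_abs_mul (A : Matrix n n ℝ) (x : n → ℝ) :
    x ⬝ᵥ A *ᵥ x ≤ (∑ i, ∑ j, |A i j|) * (x ⬝ᵥ x) := by
  have hsq (i : n) : x i * x i ≤ x ⬝ᵥ x :=
    Finset.single_le_sum (f := fun j => x j * x j) (fun j _ => mul_self_nonneg (x j))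
      (Finset.mem_univ i)
  rw [Finset.sum_mul]
  refine Finset.sum_le_sum fun i _ => ?_
  rw [Finset.sum_mul, mulVec, dotProduct, Finset.mul_sum]
  refine Finset.sum_le_sum fun j _ => ?_
  have hprod : |x i * x j| ≤ x ⬝ᵥ x := by
    rw [abs_mul]
    nlinarith [hsq i, hsq j, sq_nonneg (|x i| - |x j|), sq_abs (x i), sq_abs (x j)]
  calc x i * (A i j * x j) = A i j * (x i * x j) := by ring
    _ ≤ |A i j| * |x i * x j| := by rw [← abs_mul]; exact le_abs_self _
    _ ≤ |A i j| * (x ⬝ᵥ x) := mul_le_mul_of_nonneg_left hprod (abs_nonneg _)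

namespace PosSemidef

lemma dotProduct_mulVec_self_nonneg (hH : H.PosSemidef) (x : n → ℝ) : 0 ≤ x ⬝ᵥ H *ᵥ x := by
  simpa using hH.dotProduct_mulVec_nonneg x

lemma energyNorm_sq (hH : H.PosSemidef) (x : n → ℝ) : H.energyNorm x ^ 2 = x ⬝ᵥ H *ᵥ x :=
  Real.sq_sqrt (hH.dotProduct_mulVec_self_nonneg x)

lemma dotProduct_mulVec_comm (hH : H.PosSemidef) (x y : n → ℝ) : x ⬝ᵥ H *ᵥ y = y ⬝ᵥ H *ᵥ x := by
  rw [dotProduct_mulVec, ← mulVec_transpose, show Hᵀ = H from hH.isHermitian, dotProduct_comm]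

lemma dotProduct_mulVec_sq_le (hH : H.PosSemidef) (x y : n → ℝ) :
    (x ⬝ᵥ H *ᵥ y) ^ 2 ≤ (x ⬝ᵥ H *ᵥ x) * (y ⬝ᵥ H *ᵥ y) := by
  classical
  have := (toBilin' H).apply_mul_apply_le_of_forall_zero_le
    (fun z => by simpa [toBilin'_apply'] using hH.dotProduct_mulVec_self_nonneg z) x y
  simpa only [toBilin'_apply', hH.dotProduct_mulVec_comm y x, ← sq] using this

lemma abs_dotProduct_mulVec_le (hH : H.PosSemidef) (x y : n → ℝ) :
    |x ⬝ᵥ H *ᵥ y| ≤ H.energyNorm x * H.energyNorm y := by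
  rw [energyNorm, energyNorm, ← Real.sqrt_mul (hH.dotProduct_mulVec_self_nonneg x),
    ← Real.sqrt_sq_eq_abs]
  exact Real.sqrt_le_sqrt (hH.dotProduct_mulVec_sq_le x y)

lemma energyNorm_add_le (hH : H.PosSemidef) (x y : n → ℝ) :
    H.energyNorm (x + y) ≤ H.energyNorm x + H.energyNorm y := by
  have hxy := hH.abs_dotProduct_mulVec_le x y
  rw [← abs_of_nonneg (energyNorm_nonneg H (x + y)), ← abs_of_nonneg
    (add_nonneg (energyNorm_nonneg H x) (energyNorm_nonneg H y)), ← sq_le_sq, add_sq,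
    hH.energyNorm_sq, hH.energyNorm_sq, hH.energyNorm_sq, add_dotProduct, mulVec_add,
    dotProduct_add, dotProduct_add, hH.dotProduct_mulVec_comm y x]
  linarith [le_abs_self (x ⬝ᵥ H *ᵥ y)]

lemma abs_energyNorm_sub_le (hH : H.PosSemidef) (x y : n → ℝ) :
    |H.energyNorm x - H.energyNorm y| ≤ H.energyNorm (x - y) := by
  have hswap : H.energyNorm (y - x) = H.energyNorm (x - y) := by
    rw [← neg_sub, ← neg_one_smul ℝ, energyNorm_smul, abs_neg, abs_one, one_mul]
  rw [abs_sub_le_iff]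
  constructor
  · have h := hH.energyNorm_add_le (x - y) y
    rw [sub_add_cancel] at h
    linarith
  · have h := hH.energyNorm_add_le (y - x) x
    rw [sub_add_cancel] at h
    linarith

lemma dotProduct_mulVec_add_self_of_eq_zero (hH : H.PosSemidef) {x y : n → ℝ}
    (h : x ⬝ᵥ H *ᵥ y = 0) :
    (x + y) ⬝ᵥ H *ᵥ (x + y) = x ⬝ᵥ H *ᵥ x + y ⬝ᵥ H *ᵥ y := by
  rw [mulVec_add, add_dotProduct, dotProduct_add, dotProduct_add, hH.dotProduct_mulVec_comm y x, h]
  ring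

lemma abs_dotProduct_div_energyNorm_le (hH : H.PosSemidef) (x u : n → ℝ) :
    |x ⬝ᵥ H *ᵥ u / H.energyNorm x| ≤ H.energyNorm u := by
  rcases (energyNorm_nonneg H x).eq_or_lt with h | h
  · simpa [← h] using energyNorm_nonneg H u
  rw [abs_div, abs_of_pos h, div_le_iff₀ h, mul_comm]
  exact hH.abs_dotProduct_mulVec_le x u

lemma abs_dotProduct_div_energyNorm_sub_le (hH : H.PosSemidef) {x y : n → ℝ} {S : ℝ}
    (hS : 0 < S) (hx : S ≤ H.energyNorm x) (hy : S ≤ H.energyNorm y) (u : n → ℝ) :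
    |x ⬝ᵥ H *ᵥ u / H.energyNorm x - y ⬝ᵥ H *ᵥ u / H.energyNorm y| ≤
      2 * H.energyNorm u * H.energyNorm (y - x) / S := by
  have hσy : 0 < H.energyNorm y := hS.trans_le hy
  have hdecomp : x ⬝ᵥ H *ᵥ u / H.energyNorm x - y ⬝ᵥ H *ᵥ u / H.energyNorm y =
      x ⬝ᵥ H *ᵥ u / H.energyNorm x * ((H.energyNorm y - H.energyNorm x) / H.energyNorm y) -
        (y - x) ⬝ᵥ H *ᵥ u / H.energyNorm y := by
    have hσx : H.energyNorm x ≠ 0 := (hS.trans_le hx).ne'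
    rw [sub_dotProduct]
    field_simp
    ring
  have hnorm : |(H.energyNorm y - H.energyNorm x) / H.energyNorm y| ≤ H.energyNorm (y - x) / S := by
    rw [abs_div, abs_of_pos hσy]
    exact div_le_div₀ (energyNorm_nonneg _ _) (hH.abs_energyNorm_sub_le y x) hS hy
  have hinner : |(y - x) ⬝ᵥ H *ᵥ u / H.energyNorm y| ≤
      H.energyNorm (y - x) * H.energyNorm u / S := by
    rw [abs_div, abs_of_pos hσy]
    exact div_le_div₀ (mul_nonneg (energyNorm_nonneg _ _) (energyNorm_nonneg _ _))
      (hH.abs_dotProduct_mulVec_le _ _) hS hy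
  rw [hdecomp]
  calc _ ≤ |x ⬝ᵥ H *ᵥ u / H.energyNorm x| *
          |(H.energyNorm y - H.energyNorm x) / H.energyNorm y| +
        |(y - x) ⬝ᵥ H *ᵥ u / H.energyNorm y| := by rw [← abs_mul]; exact abs_sub _ _
    _ ≤ H.energyNorm u * (H.energyNorm (y - x) / S) +
        H.energyNorm (y - x) * H.energyNorm u / S :=
      add_le_add (mul_le_mul (hH.abs_dotProduct_div_energyNorm_le x u) hnorm
        (abs_nonneg _) (energyNorm_nonneg _ _)) hinner
    _ = 2 * H.energyNorm u * H.energyNorm (y - x) / S := by ring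

end PosSemidef

namespace PosDef

lemma dotProduct_mulVec_self_pos (hH : H.PosDef) {x : n → ℝ} (hx : x ≠ 0) :
    0 < x ⬝ᵥ H *ᵥ x := by
  simpa using hH.dotProduct_mulVec_pos hx

lemma energyNorm_pos (hH : H.PosDef) {x : n → ℝ} (hx : x ≠ 0) : 0 < H.energyNorm x :=
  Real.sqrt_pos.mpr (hH.dotProduct_mulVec_self_pos hx)

/-- Cauchy–Schwarz against `H⁻¹ x`: `(x ⬝ᵥ x)² = (x ⬝ᵥ H *ᵥ H⁻¹ *ᵥ x)² ≤ (xᵀHx)(xᵀH⁻¹x)`. -/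
lemma exists_pos_mul_dotProduct_self_le [DecidableEq n] (hH : H.PosDef) :
    ∃ m > 0, ∀ x : n → ℝ, m * (x ⬝ᵥ x) ≤ x ⬝ᵥ H *ᵥ x := by
  set K := ∑ i, ∑ j, |H⁻¹ i j|
  have hK : 0 ≤ K := by positivity
  refine ⟨(K + 1)⁻¹, by positivity, fun x => ?_⟩
  have hHinv : H *ᵥ (H⁻¹ *ᵥ x) = x := by
    rw [mulVec_mulVec, mul_nonsing_inv _ hH.det_pos.ne'.isUnit, one_mulVec]
  have hcs := hH.posSemidef.dotProduct_mulVec_sq_le x (H⁻¹ *ᵥ x)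
  rw [hHinv, dotProduct_comm (H⁻¹ *ᵥ x) x] at hcs
  have hinv := dotProduct_mulVec_le_sum_abs_mul H⁻¹ x
  have hxx : 0 ≤ x ⬝ᵥ x := by simpa using dotProduct_star_self_nonneg x
  have hq := hH.posSemidef.dotProduct_mulVec_self_nonneg x
  have hle : x ⬝ᵥ x ≤ K * (x ⬝ᵥ H *ᵥ x) := by
    rcases hxx.eq_or_lt with h | h
    · rw [← h]; positivity
    · nlinarith
  rw [inv_mul_le_iff₀ (by positivity)]
  nlinarith

lemma exists_energyNorm_mulVec_le [DecidableEq n] (hH : H.PosDef) (A : Matrix n n ℝ) :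
    ∃ L ≥ 0, ∀ x, H.energyNorm (A *ᵥ x) ≤ L * H.energyNorm x := by
  obtain ⟨m, hm, hmH⟩ := hH.exists_pos_mul_dotProduct_self_le
  set K := ∑ i, ∑ j, |(Aᵀ * H * A) i j|
  have hK : 0 ≤ K := by positivity
  refine ⟨√(K / m), Real.sqrt_nonneg _, fun x => ?_⟩
  rw [energyNorm, energyNorm, ← Real.sqrt_mul (by positivity)]
  apply Real.sqrt_le_sqrt
  have hconj : A *ᵥ x ⬝ᵥ H *ᵥ (A *ᵥ x) = x ⬝ᵥ (Aᵀ * H * A) *ᵥ x := by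
    rw [← mulVec_mulVec, ← mulVec_mulVec, mulVec_transpose, dotProduct_comm x,
      ← dotProduct_mulVec, dotProduct_comm]
  calc A *ᵥ x ⬝ᵥ H *ᵥ (A *ᵥ x) ≤ K * (x ⬝ᵥ x) := hconj ▸ dotProduct_mulVec_le_sum_abs_mul _ x
    _ ≤ K * ((x ⬝ᵥ H *ᵥ x) / m) := by
      gcongr
      rw [le_div_iff₀ hm, mul_comm]
      exact hmH x
    _ = K / m * (x ⬝ᵥ H *ᵥ x) := by ring

lemma dotProduct_mulVec_rejection (hH : H.PosDef) (w u : n → ℝ) :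
    w ⬝ᵥ H *ᵥ H.rejection w u = 0 := by
  rcases eq_or_ne w 0 with rfl | hw
  · exact zero_dotProduct _
  rw [rejection, mulVec_sub, mulVec_smul, dotProduct_sub, dotProduct_smul, smul_eq_mul,
    hH.posSemidef.energyNorm_sq, div_mul_cancel₀ _ (hH.dotProduct_mulVec_self_pos hw).ne',
    sub_self]

lemma dotProduct_mulVec_sub_div_smul (hH : H.PosDef) {w : n → ℝ} (hw : w ≠ 0)
    (u : n → ℝ) (a : ℝ) :
    (u - (a / H.energyNorm w) • w) ⬝ᵥ H *ᵥ (u - (a / H.energyNorm w) • w) =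
      H.rejection w u ⬝ᵥ H *ᵥ H.rejection w u + (a - w ⬝ᵥ H *ᵥ u / H.energyNorm w) ^ 2 := by
  have hσ : H.energyNorm w ≠ 0 := (hH.energyNorm_pos hw).ne'
  set c := (w ⬝ᵥ H *ᵥ u / H.energyNorm w - a) / H.energyNorm w
  have hdecomp : u - (a / H.energyNorm w) • w = H.rejection w u + c • w := by
    rw [rejection, sub_add, ← sub_smul]
    congr 2
    simp only [c]
    field_simp
    ring
  have horth : H.rejection w u ⬝ᵥ H *ᵥ (c • w) = 0 := by
    rw [mulVec_smul, dotProduct_smul, hH.posSemidef.dotProduct_mulVec_comm,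
      hH.dotProduct_mulVec_rejection, smul_zero]
  rw [hdecomp, hH.posSemidef.dotProduct_mulVec_add_self_of_eq_zero horth, mulVec_smul,
    dotProduct_smul, smul_dotProduct, ← hH.posSemidef.energyNorm_sq w]
  simp only [smul_eq_mul, c]
  field_simp
  ring

theorem exists_pos_le_energyNorm_of_step [DecidableEq n] (hH : H.PosDef) {u : n → ℝ}
    {w : ℕ → n → ℝ} (hw0 : w 0 ≠ 0)
    (hw : ∀ k, ∃ c : ℝ, w (k + 1) = w k + c • H *ᵥ H.rejection (w k) u) :
    ∃ S > 0, ∀ k, S ≤ H.energyNorm (w k) := by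
  obtain ⟨m, hm, hmH⟩ := hH.exists_pos_mul_dotProduct_self_le
  have hmono : Monotone fun k => w k ⬝ᵥ w k := monotone_nat_of_le_succ fun k => by
    obtain ⟨c, hc⟩ := hw k
    simp only [hc]
    apply dotProduct_self_le_add_of_dotProduct_eq_zero
    rw [dotProduct_smul, hH.dotProduct_mulVec_rejection, smul_zero]
  have hw0pos : 0 < w 0 ⬝ᵥ w 0 := by
    have : 0 ≤ w 0 ⬝ᵥ w 0 := by simpa using dotProduct_star_self_nonneg (w 0)
    exact this.lt_of_ne' (dotProduct_self_eq_zero.not.mpr hw0)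
  refine ⟨√(m * (w 0 ⬝ᵥ w 0)), Real.sqrt_pos.mpr (mul_pos hm hw0pos), fun k => ?_⟩
  exact Real.sqrt_le_sqrt
    ((mul_le_mul_of_nonneg_left (hmono (Nat.zero_le k)) hm.le).trans (hmH _))

end PosDef

theorem PosSemidef.abs_dotProduct_div_energyNorm_sub_le_of_step (hH : H.PosSemidef)
    {u w w' : n → ℝ} {a ε S L R : ℝ} (hS : 0 < S) (hSw : S ≤ H.energyNorm w)
    (hSw' : S ≤ H.energyNorm w') (hL0 : 0 ≤ L)
    (hL : ∀ x, H.energyNorm (H *ᵥ x) ≤ L * H.energyNorm x)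
    (hR : H.energyNorm (H.rejection w u) ≤ R)
    (hstep : w' = w + (ε * (a / H.energyNorm w)) • H *ᵥ H.rejection w u) :
    |w ⬝ᵥ H *ᵥ u / H.energyNorm w - w' ⬝ᵥ H *ᵥ u / H.energyNorm w'| ≤
      2 * H.energyNorm u * |ε| * L / S ^ 2 *
        (|a - w ⬝ᵥ H *ᵥ u / H.energyNorm w| + H.energyNorm u) * R := by
  set s := w ⬝ᵥ H *ᵥ u / H.energyNorm w
  have hσ : 0 < H.energyNorm w := hS.trans_le hSw
  have hcoef : |ε * (a / H.energyNorm w)| ≤ |ε| * (|a - s| + H.energyNorm u) / S := by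
    have ha : |a| ≤ |a - s| + H.energyNorm u := by
      have := hH.abs_dotProduct_div_energyNorm_le w u
      calc |a| = |(a - s) + s| := by rw [sub_add_cancel]
        _ ≤ |a - s| + |s| := abs_add_le _ _
        _ ≤ |a - s| + H.energyNorm u := by gcongr
    rw [abs_mul, abs_div, abs_of_pos hσ, mul_div_assoc]
    exact mul_le_mul_of_nonneg_left (div_le_div₀ ((abs_nonneg _).trans ha) ha hS hSw)
      (abs_nonneg ε)
  have hmove : H.energyNorm (w' - w) ≤ |ε| * (|a - s| + H.energyNorm u) / S * (L * R) := by
    rw [hstep, add_sub_cancel_left, energyNorm_smul]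
    have hHR : H.energyNorm (H *ᵥ H.rejection w u) ≤ L * R :=
      (hL _).trans (mul_le_mul_of_nonneg_left hR hL0)
    exact mul_le_mul hcoef hHR (energyNorm_nonneg _ _) ((abs_nonneg _).trans hcoef)
  calc _ ≤ 2 * H.energyNorm u * H.energyNorm (w' - w) / S :=
        hH.abs_dotProduct_div_energyNorm_sub_le hS hSw hSw' u
    _ ≤ 2 * H.energyNorm u * (|ε| * (|a - s| + H.energyNorm u) / S * (L * R)) / S := by
        gcongr
        exact mul_nonneg zero_le_two (energyNorm_nonneg _ _)
    _ = _ := by ring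

end Matrix

theorem abs_add_le_mul_exp_of_recurrence {b δ : ℕ → ℝ} {q Λ N ρ : ℝ} (hq : |q| ≤ 1)
    (hΛ : 0 ≤ Λ) (hN : 0 ≤ N) (hρ0 : 0 ≤ ρ) (hρ1 : ρ < 1)
    (hb : ∀ k, b (k + 1) = q * b k + δ k) (hδ : ∀ k, |δ k| ≤ Λ * (|b k| + N) * ρ ^ k)
    (k : ℕ) : |b k| + N ≤ (|b 0| + N) * Real.exp (Λ / (1 - ρ)) := by
  have hstep (k : ℕ) (_ : k ≥ 0) : |b (k + 1)| + N ≤ (1 + Λ * ρ ^ k) * (|b k| + N) + 0 := by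
    have hqb : |q * b k| ≤ |b k| := by
      rw [abs_mul]; exact mul_le_of_le_one_left (abs_nonneg _) hq
    have := hδ k
    calc |b (k + 1)| + N ≤ |q * b k| + |δ k| + N := by rw [hb]; gcongr; exact abs_add_le _ _
      _ ≤ (1 + Λ * ρ ^ k) * (|b k| + N) + 0 := by nlinarith [abs_nonneg (b k)]
  have hgron := discrete_gronwall (u := fun k => |b k| + N) (by positivity) hstep
    (fun k _ => by positivity) (fun _ _ => le_rfl) (Nat.zero_le k)
  simp only [Finset.sum_const_zero, add_zero, ← Finset.mul_sum] at hgron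
  refine hgron.trans (mul_le_mul_of_nonneg_left (Real.exp_le_exp.mpr ?_) (by positivity))
  calc Λ * ∑ i ∈ Finset.Ico 0 k, ρ ^ i ≤ Λ * (ρ ^ 0 / (1 - ρ)) :=
        mul_le_mul_of_nonneg_left (geom_sum_Ico_le_of_lt_one hρ0 hρ1) hΛ
    _ = Λ / (1 - ρ) := by rw [pow_zero, mul_one_div]

theorem abs_le_mul_pow_add_of_recurrence {b δ : ℕ → ℝ} {q ρ γ D : ℝ} (hq : 0 ≤ q)
    (hqγ : q ≤ γ) (hρ : 0 ≤ ρ) (hργ : ρ ≤ γ) (hγ : 0 < γ)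
    (hb : ∀ k, b (k + 1) = q * b k + δ k) (hδ : ∀ k, |δ k| ≤ D * ρ ^ k) (k : ℕ) :
    |b k| ≤ |b 0| * q ^ k + D / γ * k * γ ^ k := by
  have hD : 0 ≤ D := by simpa using (abs_nonneg _).trans (hδ 0)
  induction k with
  | zero => simp
  | succ k ih =>
    have hρk : ρ ^ k ≤ γ ^ k := pow_le_pow_left₀ hρ hργ k
    have hlin : q * (D / γ * k * γ ^ k) ≤ D / γ * k * γ ^ (k + 1) := by
      rw [pow_succ, mul_comm q, ← mul_assoc]
      exact mul_le_mul_of_nonneg_left hqγ (by positivity)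
    calc |b (k + 1)| ≤ |q * b k| + |δ k| := by rw [hb]; exact abs_add_le _ _
      _ ≤ q * |b k| + D * ρ ^ k := by
          rw [abs_mul, abs_of_nonneg hq]; exact add_le_add_right (hδ k) _
      _ ≤ q * (|b 0| * q ^ k + D / γ * k * γ ^ k) + D * γ ^ k := by gcongr
      _ ≤ |b 0| * q ^ (k + 1) + D / γ * ↑(k + 1) * γ ^ (k + 1) := by
        have hγk : D * γ ^ k = D / γ * γ ^ (k + 1) := by
          rw [pow_succ]; field_simp
        have hqk : q * (|b 0| * q ^ k) = |b 0| * q ^ (k + 1) := by ring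
        have hk : D / γ * ↑(k + 1) * γ ^ (k + 1) =
            D / γ * k * γ ^ (k + 1) + D / γ * γ ^ (k + 1) := by
          push_cast; ring
        rw [hk, mul_add, hqk, hγk]
        linarith

theorem exists_abs_le_mul_pow_add_of_recurrence {b δ : ℕ → ℝ} {q Λ N ρ : ℝ} (hq0 : 0 ≤ q)
    (hq1 : q ≤ 1) (hΛ : 0 ≤ Λ) (hN : 0 ≤ N) (hρ0 : 0 < ρ) (hρ1 : ρ < 1)
    (hb : ∀ k, b (k + 1) = q * b k + δ k) (hδ : ∀ k, |δ k| ≤ Λ * (|b k| + N) * ρ ^ k) :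
    ∃ C > 0, ∀ k : ℕ, |b k| ≤ |b 0| * q ^ k + C * k * max ρ q ^ k := by
  set B := (|b 0| + N) * Real.exp (Λ / (1 - ρ))
  have hbB := abs_add_le_mul_exp_of_recurrence (by rwa [abs_of_nonneg hq0]) hΛ hN hρ0.le hρ1 hb hδ
  have hγ : 0 < max ρ q := lt_max_of_lt_left hρ0
  have hδB (k : ℕ) : |δ k| ≤ (Λ * B + 1) * ρ ^ k := by
    calc |δ k| ≤ Λ * (|b k| + N) * ρ ^ k := hδ k
      _ ≤ (Λ * B + 1) * ρ ^ k := by gcongr; linarith [mul_le_mul_of_nonneg_left (hbB k) hΛ]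
  have hB : 0 ≤ B := by positivity
  exact ⟨(Λ * B + 1) / max ρ q, by positivity, abs_le_mul_pow_add_of_recurrence hq0
    (le_max_right _ _) hρ0.le (le_max_left _ _) hγ hb hδB⟩

theorem bngd_loss_linear_convergence_general
    {d : ℕ}
    (H : Matrix (Fin d) (Fin d) ℝ) (hH : H.PosDef)
    (u : Fin d → ℝ)
    (εa ε : ℝ) (hεa : 0 < εa) (hεa1 : εa ≤ 1)
    (g : Fin d → ℝ) (hg : g = H.mulVec u)
    (σ : (Fin d → ℝ) → ℝ) (hσ : ∀ v, σ v = Real.sqrt (v ⬝ᵥ H.mulVec v))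
    (a : ℕ → ℝ) (w : ℕ → Fin d → ℝ) (hw0 : w 0 ≠ 0)
    (ha : ∀ k, a (k + 1) = a k + εa * ((w k ⬝ᵥ g) / σ (w k) - a k))
    (hw : ∀ k, w (k + 1) = w k +
      (ε * (a k / σ (w k))) • (g - ((w k ⬝ᵥ g) / (σ (w k)) ^ 2) • H.mulVec (w k)))
    (e : ℕ → Fin d → ℝ)
    (he : ∀ k, e k = u - ((w k ⬝ᵥ g) / (σ (w k)) ^ 2) • w k)
    (et : ℕ → Fin d → ℝ)
    (het : ∀ k, et k = u - (a k / σ (w k)) • w k) :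
    (∀ k, et k ⬝ᵥ H.mulVec (et k) =
        e k ⬝ᵥ H.mulVec (e k) + (a k - (w k ⬝ᵥ g) / σ (w k)) ^ 2) ∧
    (∀ C ρ : ℝ, 0 < C → 0 < ρ → ρ < 1 →
      (∀ k, Real.sqrt (e k ⬝ᵥ H.mulVec (e k)) ≤ C * ρ ^ k) →
      ∃ C₂ > (0 : ℝ), ∀ k : ℕ,
        et k ⬝ᵥ H.mulVec (et k) ≤
          C ^ 2 * ρ ^ (2 * k) +
            (|a 0 - (w 0 ⬝ᵥ g) / σ (w 0)| * (1 - εa) ^ k +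
              C₂ * k * (max ρ (1 - εa)) ^ k) ^ 2) := by
  obtain rfl : σ = H.energyNorm := funext hσ
  subst hg
  obtain rfl : e = fun k => H.rejection (w k) u := funext he
  obtain rfl : et = fun k => u - (a k / H.energyNorm (w k)) • w k := funext het
  have hstep (k : ℕ) :
      w (k + 1) = w k + (ε * (a k / H.energyNorm (w k))) • H *ᵥ H.rejection (w k) u := by
    rw [hw k, rejection, mulVec_sub, mulVec_smul]
  obtain ⟨S, hS, hSw⟩ := hH.exists_pos_le_energyNorm_of_step hw0 fun k => ⟨_, hstep k⟩
  have hwk (k : ℕ) : w k ≠ 0 := fun h => by simpa [h, energyNorm] using hS.trans_le (hSw k)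
  refine ⟨fun k => hH.dotProduct_mulVec_sub_div_smul (hwk k) u (a k), ?_⟩
  intro C ρ hC hρ0 hρ1 hres
  obtain ⟨L, hL0, hL⟩ := hH.exists_energyNorm_mulVec_le H
  have hu := energyNorm_nonneg H u
  obtain ⟨C₂, hC₂, hbound⟩ := exists_abs_le_mul_pow_add_of_recurrence
    (b := fun k => a k - w k ⬝ᵥ H *ᵥ u / H.energyNorm (w k))
    (δ := fun k => w k ⬝ᵥ H *ᵥ u / H.energyNorm (w k) -
      w (k + 1) ⬝ᵥ H *ᵥ u / H.energyNorm (w (k + 1)))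
    (q := 1 - εa) (Λ := 2 * H.energyNorm u * |ε| * L / S ^ 2 * C) (N := H.energyNorm u)
    (by linarith) (by linarith) (by positivity)
    hu hρ0 hρ1 (fun k => by simp only [ha k]; ring) fun k =>
      (hH.posSemidef.abs_dotProduct_div_energyNorm_sub_le_of_step hS (hSw k) (hSw (k + 1)) hL0
        hL (hres k) (hstep k)).trans_eq (by ring)
  refine ⟨C₂, hC₂, fun k => ?_⟩
  rw [hH.dotProduct_mulVec_sub_div_smul (hwk k), ← hH.posSemidef.energyNorm_sq, pow_mul',
    ← mul_pow, ← sq_abs (a k - _)]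
  exact add_le_add (pow_le_pow_left₀ (energyNorm_nonneg _ _) (hres k) 2)
    (pow_le_pow_left₀ (abs_nonneg _) (hbound k) 2)

/-- Linear convergence of the BN-OLS loss from linear convergence of the residual:
with `ẽ_k = u − (a_k/σ(w_k))w_k` and `e_k = u − (w_kᵀg/σ(w_k)²)w_k`, the identity
`‖ẽ_k‖²_H = ‖e_k‖²_H + (a_k − w_kᵀg/σ(w_k))²` holds; moreover if `‖e_k‖_H ≤ C ρ^k`
with `ρ ∈ (0,1)` and `ε_a ∈ (0,1]`, then
`‖ẽ_k‖²_H ≤ C²ρ^{2k} + (C₁(1 − ε_a)^k + C₂·k·γ^k)²`, where `γ = max(ρ, 1 − ε_a)` and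
`C₁ = |a₀ − w₀ᵀg/σ(w₀)|`, for some constant `C₂ > 0`. -/
theorem bngd_loss_linear_convergence
    {d : ℕ} (hd : 0 < d)
    (H : Matrix (Fin d) (Fin d) ℝ) (hH : H.PosDef)
    (u : Fin d → ℝ) (hu : u ≠ 0)
    (εa ε : ℝ) (hεa : 0 < εa) (hεa1 : εa ≤ 1) (hε : 0 < ε)
    (g : Fin d → ℝ) (hg : g = H.mulVec u)
    (σ : (Fin d → ℝ) → ℝ) (hσ : ∀ v, σ v = Real.sqrt (v ⬝ᵥ H.mulVec v))
    (a : ℕ → ℝ) (w : ℕ → Fin d → ℝ) (hw0 : w 0 ≠ 0) (hwk : ∀ k, w k ≠ 0)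
    (ha : ∀ k, a (k + 1) = a k + εa * ((w k ⬝ᵥ g) / σ (w k) - a k))
    (hw : ∀ k, w (k + 1) = w k +
      (ε * (a k / σ (w k))) • (g - ((w k ⬝ᵥ g) / (σ (w k)) ^ 2) • H.mulVec (w k)))
    (e : ℕ → Fin d → ℝ)
    (he : ∀ k, e k = u - ((w k ⬝ᵥ g) / (σ (w k)) ^ 2) • w k)
    (et : ℕ → Fin d → ℝ)
    (het : ∀ k, et k = u - (a k / σ (w k)) • w k) :
    (∀ k, et k ⬝ᵥ H.mulVec (et k) =
        e k ⬝ᵥ H.mulVec (e k) + (a k - (w k ⬝ᵥ g) / σ (w k)) ^ 2) ∧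
    (∀ C ρ : ℝ, 0 < C → 0 < ρ → ρ < 1 →
      (∀ k, Real.sqrt (e k ⬝ᵥ H.mulVec (e k)) ≤ C * ρ ^ k) →
      ∃ C₂ > (0 : ℝ), ∀ k : ℕ,
        et k ⬝ᵥ H.mulVec (et k) ≤
          C ^ 2 * ρ ^ (2 * k) +
            (|a 0 - (w 0 ⬝ᵥ g) / σ (w 0)| * (1 - εa) ^ k +
              C₂ * k * (max ρ (1 - εa)) ^ k) ^ 2) :=
  bngd_loss_linear_convergence_general H hH u εa ε hεa hεa1 g hg σ hσ a w hw0 ha hw e he et het
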